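/- The power iteration sequence x^{(p+1)} = e^{i·angle(R x^{(p)})} applied to a Hermitian positive definite matrix R, starting from any unit-modulus vector x^{(0)} with (Rx^{(p)})_n ≠ 0 for all p, n, produces a sequence whose objective values f(x^{(p)}) = (x^{(p)})ᴴ R x^{(p)} form a monotonically nondecreasing, bounded, and hence convergent real sequence. -/

import Mathlib

/-!
Choosing `x⁽ᵖ⁺¹⁾ᵢ = exp (i · arg (R x⁽ᵖ⁾)ᵢ)` maximizes `Re (zᴴ R x⁽ᵖ⁾)` over unit-modulus `z`, so
`Re (x⁽ᵖ⁺¹⁾ᴴ R x⁽ᵖ⁾) ≥ f (x⁽ᵖ⁾)`. Expanding `0 ≤ (x⁽ᵖ⁺¹⁾ - x⁽ᵖ⁾)ᴴ R (x⁽ᵖ⁺¹⁾ - x⁽ᵖ⁾)` then gives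
`f (x⁽ᵖ⁺¹⁾) ≥ 2 Re (x⁽ᵖ⁺¹⁾ᴴ R x⁽ᵖ⁾) - f (x⁽ᵖ⁾) ≥ f (x⁽ᵖ⁾)`. On unit-modulus vectors `f` is bounded
by `∑ᵢⱼ |Rᵢⱼ|`, and a bounded monotone sequence converges.
-/

open Matrix
open scoped ComplexOrder

namespace Complex

lemma star_exp_I_mul_arg_mul_self (z : ℂ) : star (exp (I * arg z)) * z = ‖z‖ := by
  have hphase : star (exp (I * arg z)) * exp (I * arg z) = 1 := by
    rw [star_def, conj_mul', norm_exp_I_mul_ofReal, ofReal_one, one_pow]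
  calc star (exp (I * arg z)) * z = star (exp (I * arg z)) * (‖z‖ * exp (I * arg z)) := by
        rw [mul_comm I, norm_mul_exp_arg_mul_I]
    _ = ‖z‖ := by rw [mul_left_comm, hphase, mul_one]

end Complex

section UnitModulus

variable {ι : Type*} [Fintype ι]

lemma re_star_dotProduct_le_of_eq_exp_I_mul_arg {a b v : ι → ℂ} (ha : ∀ i, ‖a i‖ ≤ 1)
    (hb : ∀ i, b i = Complex.exp (Complex.I * (Complex.arg (v i) : ℂ))) :
    (star a ⬝ᵥ v).re ≤ (star b ⬝ᵥ v).re := by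
  simp only [dotProduct, Pi.star_apply, Complex.re_sum, hb, Complex.star_exp_I_mul_arg_mul_self,
    Complex.ofReal_re]
  gcongr with i
  calc (star (a i) * v i).re ≤ ‖star (a i) * v i‖ := Complex.re_le_norm _
    _ = ‖a i‖ * ‖v i‖ := by rw [norm_mul, norm_star]
    _ ≤ ‖v i‖ := mul_le_of_le_one_left (norm_nonneg _) (ha i)

lemma re_star_dotProduct_mulVec_le_sum_norm (R : Matrix ι ι ℂ) {a : ι → ℂ}
    (ha : ∀ i, ‖a i‖ ≤ 1) : (star a ⬝ᵥ R *ᵥ a).re ≤ ∑ i, ∑ j, ‖R i j‖ := by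
  have hentry (i j : ι) : ‖star (a i) * (R i j * a j)‖ ≤ ‖R i j‖ := by
    calc ‖star (a i) * (R i j * a j)‖ = ‖a i‖ * (‖R i j‖ * ‖a j‖) := by
          rw [norm_mul, norm_mul, norm_star]
      _ ≤ 1 * (‖R i j‖ * 1) := by gcongr <;> exact ha _
      _ = ‖R i j‖ := by ring
  calc (star a ⬝ᵥ R *ᵥ a).re ≤ ‖star a ⬝ᵥ R *ᵥ a‖ := Complex.re_le_norm _
    _ = ‖∑ i, ∑ j, star (a i) * (R i j * a j)‖ := by
      simp only [dotProduct, mulVec, Pi.star_apply, Finset.mul_sum]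
    _ ≤ ∑ i, ∑ j, ‖star (a i) * (R i j * a j)‖ :=
      (norm_sum_le _ _).trans (Finset.sum_le_sum fun i _ => norm_sum_le _ _)
    _ ≤ ∑ i, ∑ j, ‖R i j‖ := by gcongr with i _ j; exact hentry i j

end UnitModulus

namespace Matrix

variable {ι : Type*} [Fintype ι] {R : Matrix ι ι ℂ}

lemma IsHermitian.re_star_dotProduct_mulVec_comm (hR : R.IsHermitian) (a b : ι → ℂ) :
    (star a ⬝ᵥ R *ᵥ b).re = (star b ⬝ᵥ R *ᵥ a).re := by
  rw [← Complex.conj_re, ← Complex.star_def, star_dotProduct, star_mulVec, hR.eq, star_star,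
    dotProduct_mulVec, dotProduct_comm]

lemma PosSemidef.re_quadForm_le_of_le_re_cross (hR : R.PosSemidef) {a b : ι → ℂ}
    (h : (star a ⬝ᵥ R *ᵥ a).re ≤ (star b ⬝ᵥ R *ᵥ a).re) :
    (star a ⬝ᵥ R *ᵥ a).re ≤ (star b ⬝ᵥ R *ᵥ b).re := by
  have hdiff : 0 ≤ (star (b - a) ⬝ᵥ R *ᵥ (b - a)).re := hR.re_dotProduct_nonneg (b - a)
  have hcomm := hR.isHermitian.re_star_dotProduct_mulVec_comm a b
  simp only [star_sub, mulVec_sub, sub_dotProduct, dotProduct_sub, Complex.sub_re] at hdiff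
  linarith

end Matrix

theorem stmt5_general {N : ℕ} (R : Matrix (Fin (N+1)) (Fin (N+1)) ℂ) (hR : R.PosDef)
    (x : ℕ → Fin (N+1) → ℂ) (h0 : ∀ n, ‖x 0 n‖ = 1)
    (hrec : ∀ p n, x (p+1) n =
      Complex.exp (Complex.I * (Complex.arg (R.mulVec (x p) n) : ℂ))) :
    Monotone (fun p => (star (x p) ⬝ᵥ R.mulVec (x p)).re) ∧
    BddAbove (Set.range fun p => (star (x p) ⬝ᵥ R.mulVec (x p)).re) ∧
    ∃ L : ℝ, Filter.Tendsto (fun p => (star (x p) ⬝ᵥ R.mulVec (x p)).re)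
      Filter.atTop (nhds L) := by
  have hunit : ∀ p n, ‖x p n‖ ≤ 1
    | 0, n => (h0 n).le
    | p + 1, n => (hrec p n ▸ Complex.norm_exp_I_mul_ofReal _).le
  have hmono : Monotone (fun p => (star (x p) ⬝ᵥ R.mulVec (x p)).re) :=
    monotone_nat_of_le_succ fun p => hR.posSemidef.re_quadForm_le_of_le_re_cross
      (re_star_dotProduct_le_of_eq_exp_I_mul_arg (hunit p) (hrec p))
  have hbdd : BddAbove (Set.range fun p => (star (x p) ⬝ᵥ R.mulVec (x p)).re) :=
    ⟨_, Set.forall_mem_range.2 fun p => re_star_dotProduct_mulVec_le_sum_norm R (hunit p)⟩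
  exact ⟨hmono, hbdd, _, tendsto_atTop_ciSup hmono hbdd⟩

theorem stmt5 {N : ℕ} (R : Matrix (Fin (N+1)) (Fin (N+1)) ℂ) (hR : R.PosDef)
    (x : ℕ → Fin (N+1) → ℂ) (h0 : ∀ n, ‖x 0 n‖ = 1)
    (hnz : ∀ p n, R.mulVec (x p) n ≠ 0)
    (hrec : ∀ p n, x (p+1) n =
      Complex.exp (Complex.I * (Complex.arg (R.mulVec (x p) n) : ℂ))) :
    Monotone (fun p => (star (x p) ⬝ᵥ R.mulVec (x p)).re) ∧
    BddAbove (Set.range fun p => (star (x p) ⬝ᵥ R.mulVec (x p)).re) ∧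
    ∃ L : ℝ, Filter.Tendsto (fun p => (star (x p) ⬝ᵥ R.mulVec (x p)).re)
      Filter.atTop (nhds L) :=
  stmt5_general R hR x h0 hrec
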